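/- Let 𝕂 be ℝ or ℂ and let r = (r_1,…,r_n) be a vector of positive reals. A matrix F ∈ 𝕂^{d×n} is a critical point of the total frame energy Φ_r (i.e. ∇Φ_r(F) = 0) if and only if each column f_i satisfies the eigenvector equation 4 F F* f_i = (4 + 1/r_i − ‖f_i‖²/r_i²) f_i for every i = 1,…,n. -/

import Mathlib

open scoped BigOperators Matrix

attribute [local instance] Matrix.normedAddCommGroup Matrix.normedSpace

/-- The total frame energy. -/
noncomputable def totalFrameEnergy {d n : ℕ} {𝕂 : Type*} [RCLike 𝕂]
    (r : Fin n → ℝ) (F : Matrix (Fin d) (Fin n) 𝕂) : ℝ :=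
  (∑ i, ∑ j, ‖(F * Fᴴ - 1 : Matrix (Fin d) (Fin d) 𝕂) i j‖ ^ 2) +
    (1 / 4) * ∑ i, ((∑ j, ‖F j i‖ ^ 2) / r i - 1) ^ 2

/-- The real Frobenius inner product `⟨X, Y⟩ = Re tr (Xᴴ Y)`, written entrywise. -/
noncomputable def frobInner {d n : ℕ} {𝕂 : Type*} [RCLike 𝕂]
    (X Y : Matrix (Fin d) (Fin n) 𝕂) : ℝ :=
  ∑ i, ∑ j, RCLike.re ((starRingEnd 𝕂) (X i j) * Y i j)

/-- `G` is the gradient of `Φ` at `F` w.r.t. the real Frobenius inner product. -/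
noncomputable def IsFrobGradientAt {d n : ℕ} {𝕂 : Type*} [RCLike 𝕂]
    (Φ : Matrix (Fin d) (Fin n) 𝕂 → ℝ) (G F : Matrix (Fin d) (Fin n) 𝕂) : Prop :=
  DifferentiableAt ℝ Φ F ∧ ∀ X, fderiv ℝ Φ F X = frobInner G X

/-!
Φ_r is a sum of Frobenius quadratic forms: ‖FF* − I‖² = ⟨M(F), M(F)⟩ with M(F) = FF* − I, and
‖fᵢ‖² = ⟨F, F Eᵢᵢ⟩. The product rule for bilinear maps, together with the fact that FF* − I is
Hermitian, gives ∇Φ_r(F) = 4(FF* − I)F + F diag((‖fᵢ‖²/rᵢ − 1)/rᵢ). The Frobenius inner product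
is definite, so the gradient is unique and F is critical iff this matrix vanishes; column by column
that is the eigenvector equation.
-/

open RCLike

section FrobeniusInner

variable {𝕂 : Type*} [RCLike 𝕂] {d n : ℕ}

lemma frobInner_eq_re_trace (A B : Matrix (Fin d) (Fin n) 𝕂) :
    frobInner A B = re (Aᴴ * B).trace := by
  simp only [frobInner, Matrix.trace, Matrix.diag, Matrix.mul_apply, Matrix.conjTranspose_apply,
    star_def, map_sum]
  exact Finset.sum_comm

lemma frobInner_comm (A B : Matrix (Fin d) (Fin n) 𝕂) : frobInner A B = frobInner B A := by
  simp only [frobInner]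
  congr! 2 with i _ j _
  rw [← conj_re, map_mul, conj_conj, mul_comm]

lemma frobInner_conjTranspose (A B : Matrix (Fin d) (Fin n) 𝕂) :
    frobInner Aᴴ Bᴴ = frobInner A B := by
  simp only [frobInner, Matrix.conjTranspose_apply, star_def, ← map_mul, conj_re]
  exact Finset.sum_comm

lemma frobInner_mul_conjTranspose {m : ℕ} (A : Matrix (Fin d) (Fin n) 𝕂)
    (B : Matrix (Fin d) (Fin m) 𝕂) (C : Matrix (Fin n) (Fin m) 𝕂) :
    frobInner A (B * Cᴴ) = frobInner (A * C) B := by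
  rw [frobInner_eq_re_trace, frobInner_eq_re_trace, ← Matrix.mul_assoc, Matrix.trace_mul_cycle,
    Matrix.conjTranspose_mul, Matrix.mul_assoc]

lemma frobInner_self (A : Matrix (Fin d) (Fin n) 𝕂) :
    frobInner A A = ∑ i, ∑ j, ‖A i j‖ ^ 2 := by
  simp only [frobInner, RCLike.conj_mul]
  norm_cast

lemma frobInner_self_eq_zero {A : Matrix (Fin d) (Fin n) 𝕂} : frobInner A A = 0 ↔ A = 0 := by
  have hnonneg : ∀ i, 0 ≤ ∑ j, ‖A i j‖ ^ 2 := fun i => by positivity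
  simp [frobInner_self, Finset.sum_eq_zero_iff_of_nonneg, hnonneg, ← Matrix.ext_iff]

lemma isBilinearMap_frobInner :
    IsBilinearMap ℝ (frobInner : Matrix (Fin d) (Fin n) 𝕂 → _ → ℝ) where
  add_left _ _ _ := by
    simp only [frobInner, Matrix.add_apply, map_add, add_mul, Finset.sum_add_distrib]
  smul_left _ _ _ := by simp [frobInner, Finset.mul_sum, real_smul_eq_coe_mul, mul_assoc]
  add_right _ _ _ := by
    simp only [frobInner, Matrix.add_apply, mul_add, map_add, Finset.sum_add_distrib]
  smul_right _ _ _ := by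
    simp [frobInner, Finset.mul_sum, real_smul_eq_coe_mul, mul_left_comm, mul_add]

lemma frobInner_sub_left (A B X : Matrix (Fin d) (Fin n) 𝕂) :
    frobInner (A - B) X = frobInner A X - frobInner B X :=
  LinearMap.congr_fun (map_sub isBilinearMap_frobInner.toLinearMap A B) X

end FrobeniusInner

lemma IsBilinearMap.hasFDerivAt_diag {E G : Type*} [NormedAddCommGroup E] [NormedSpace ℝ E]
    [FiniteDimensional ℝ E] [NormedAddCommGroup G] [NormedSpace ℝ G] {B : E → E → G}
    (hB : IsBilinearMap ℝ B) (x : E) :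
    HasFDerivAt (fun y => B y y)
      (hB.toContinuousBilinearMap x + hB.toContinuousBilinearMap.flip x) x := by
  refine (hB.toContinuousBilinearMap.hasFDerivAt_of_bilinear (hasFDerivAt_id x)
    (hasFDerivAt_id x)).congr_fderiv ?_
  ext v
  simp

section Gradient

variable {𝕂 : Type*} [RCLike 𝕂] {d n : ℕ} {Φ Ψ : Matrix (Fin d) (Fin n) 𝕂 → ℝ}
  {G G₁ G₂ F : Matrix (Fin d) (Fin n) 𝕂}

-- `L` is left untyped so that its type carries the normed instances that `HasFDerivAt` uses.
lemma HasFDerivAt.isFrobGradientAt {L} (h : HasFDerivAt (𝕜 := ℝ) Φ L F)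
    (hL : ∀ X : Matrix (Fin d) (Fin n) 𝕂, L X = frobInner G X) : IsFrobGradientAt Φ G F :=
  ⟨h.differentiableAt, fun X => by rw [h.fderiv, hL]⟩

lemma IsFrobGradientAt.unique (h₁ : IsFrobGradientAt Φ G₁ F) (h₂ : IsFrobGradientAt Φ G₂ F) :
    G₁ = G₂ := by
  have hdiff : ∀ X, frobInner (G₁ - G₂) X = 0 := fun X => by
    rw [frobInner_sub_left, ← h₁.2, ← h₂.2, sub_self]
  exact sub_eq_zero.1 (frobInner_self_eq_zero.1 (hdiff _))

lemma IsFrobGradientAt.zero_iff (h : IsFrobGradientAt Φ G F) : IsFrobGradientAt Φ 0 F ↔ G = 0 :=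
  ⟨fun h₀ => h.unique h₀, fun hG => hG ▸ h⟩

lemma IsFrobGradientAt.add (h₁ : IsFrobGradientAt Φ G₁ F) (h₂ : IsFrobGradientAt Ψ G₂ F) :
    IsFrobGradientAt (fun A => Φ A + Ψ A) (G₁ + G₂) F :=
  (h₁.1.hasFDerivAt.add h₂.1.hasFDerivAt).isFrobGradientAt fun X => by
    show fderiv ℝ Φ F X + fderiv ℝ Ψ F X = _
    rw [h₁.2, h₂.2, isBilinearMap_frobInner.add_left]

lemma isFrobGradientAt_const (c : ℝ) :
    IsFrobGradientAt (fun _ => c) (0 : Matrix (Fin d) (Fin n) 𝕂) F :=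
  (hasFDerivAt_const c F).isFrobGradientAt fun X => by
    show 0 = _
    simp [frobInner]

lemma IsFrobGradientAt.sum {ι : Type*} (s : Finset ι) {Φ : ι → Matrix (Fin d) (Fin n) 𝕂 → ℝ}
    {G : ι → Matrix (Fin d) (Fin n) 𝕂} (h : ∀ i ∈ s, IsFrobGradientAt (Φ i) (G i) F) :
    IsFrobGradientAt (fun A => ∑ i ∈ s, Φ i A) (∑ i ∈ s, G i) F := by
  classical
  induction s using Finset.induction_on with
  | empty => simpa using isFrobGradientAt_const 0
  | insert a s ha ih =>
    simp only [Finset.sum_insert ha]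
    exact (h a (s.mem_insert_self a)).add (ih fun i hi => h i (Finset.mem_insert_of_mem hi))

lemma HasDerivAt.comp_isFrobGradientAt {φ : ℝ → ℝ} {φ' : ℝ} (hφ : HasDerivAt φ φ' (Φ F))
    (hΦ : IsFrobGradientAt Φ G F) : IsFrobGradientAt (φ ∘ Φ) (φ' • G) F :=
  (hφ.hasFDerivAt.comp F hΦ.1.hasFDerivAt).isFrobGradientAt fun X => by
    show fderiv ℝ Φ F X * φ' = _
    rw [hΦ.2, isBilinearMap_frobInner.smul_left, smul_eq_mul, mul_comm]

end Gradient

section FrameEnergy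

variable {𝕂 : Type*} [RCLike 𝕂] {d n : ℕ}

lemma Matrix.IsHermitian.frobInner_mul_conjTranspose_add {H : Matrix (Fin d) (Fin d) 𝕂}
    (hH : H.IsHermitian) (F X : Matrix (Fin d) (Fin n) 𝕂) :
    frobInner H (F * Xᴴ + X * Fᴴ) = 2 * frobInner (H * F) X := by
  have hswap : frobInner H (F * Xᴴ) = frobInner H (X * Fᴴ) := by
    rw [← frobInner_conjTranspose H, hH.eq, Matrix.conjTranspose_mul,
      Matrix.conjTranspose_conjTranspose]
  rw [isBilinearMap_frobInner.add_right, hswap, frobInner_mul_conjTranspose]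
  ring

lemma isBilinearMap_mul_conjTranspose :
    IsBilinearMap ℝ fun A B : Matrix (Fin d) (Fin n) 𝕂 => A * Bᴴ where
  add_left _ _ _ := Matrix.add_mul _ _ _
  smul_left _ _ _ := Matrix.smul_mul _ _ _
  add_right _ _ _ := by rw [Matrix.conjTranspose_add, Matrix.mul_add]
  smul_right _ _ _ := by rw [Matrix.conjTranspose_smul, star_trivial, Matrix.mul_smul]

lemma isFrobGradientAt_frameTerm (F : Matrix (Fin d) (Fin n) 𝕂) :
    IsFrobGradientAt (fun G : Matrix (Fin d) (Fin n) 𝕂 =>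
        ∑ i, ∑ j, ‖(G * Gᴴ - 1 : Matrix (Fin d) (Fin d) 𝕂) i j‖ ^ 2)
      ((4 : ℝ) • ((F * Fᴴ - 1) * F)) F := by
  have hM := (isBilinearMap_mul_conjTranspose.hasFDerivAt_diag F).sub_const
    (1 : Matrix (Fin d) (Fin d) 𝕂)
  have hΦ := (isBilinearMap_frobInner.hasFDerivAt_diag (F * Fᴴ - 1)).comp F hM
  have hΦ_eq : (fun G : Matrix (Fin d) (Fin n) 𝕂 =>
        ∑ i, ∑ j, ‖(G * Gᴴ - 1 : Matrix (Fin d) (Fin d) 𝕂) i j‖ ^ 2) =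
      (fun A => frobInner A A) ∘ fun G => G * Gᴴ - 1 := by
    funext G
    simp [frobInner_self]
  rw [hΦ_eq]
  refine hΦ.isFrobGradientAt fun X => ?_
  have hH := (Matrix.isHermitian_mul_conjTranspose_self F).sub Matrix.isHermitian_one
  show frobInner (F * Fᴴ - 1) (F * Xᴴ + X * Fᴴ) + frobInner (F * Xᴴ + X * Fᴴ) (F * Fᴴ - 1) = _
  rw [frobInner_comm _ (F * Fᴴ - 1), hH.frobInner_mul_conjTranspose_add,
    isBilinearMap_frobInner.smul_left, smul_eq_mul]
  ring

lemma isBilinearMap_frobInner_mul (M : Matrix (Fin n) (Fin n) 𝕂) :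
    IsBilinearMap ℝ fun A B : Matrix (Fin d) (Fin n) 𝕂 => frobInner A (B * M) where
  add_left _ _ _ := isBilinearMap_frobInner.add_left _ _ _
  smul_left _ _ _ := isBilinearMap_frobInner.smul_left _ _ _
  add_right _ _ _ := by rw [Matrix.add_mul, isBilinearMap_frobInner.add_right]
  smul_right _ _ _ := by rw [Matrix.smul_mul, isBilinearMap_frobInner.smul_right]

lemma Matrix.IsHermitian.isFrobGradientAt_frobInner_mul {M : Matrix (Fin n) (Fin n) 𝕂}
    (hM : M.IsHermitian) (F : Matrix (Fin d) (Fin n) 𝕂) :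
    IsFrobGradientAt (fun A => frobInner A (A * M)) ((2 : ℝ) • (F * M)) F := by
  refine ((isBilinearMap_frobInner_mul M).hasFDerivAt_diag F).isFrobGradientAt fun X => ?_
  show frobInner F (X * M) + frobInner X (F * M) = _
  rw [← hM.eq, frobInner_mul_conjTranspose, hM.eq, frobInner_comm X,
    isBilinearMap_frobInner.smul_left, smul_eq_mul]
  ring

lemma colNormSq_eq_frobInner (A : Matrix (Fin d) (Fin n) 𝕂) (i : Fin n) :
    ∑ j, ‖A j i‖ ^ 2 = frobInner A (A * Matrix.diagonal (Pi.single i (1 : 𝕂))) := by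
  simp [frobInner, Matrix.mul_diagonal, Pi.single_apply, RCLike.conj_mul, apply_ite re]

lemma isFrobGradientAt_colNormSq (F : Matrix (Fin d) (Fin n) 𝕂) (i : Fin n) :
    IsFrobGradientAt (fun A : Matrix (Fin d) (Fin n) 𝕂 => ∑ j, ‖A j i‖ ^ 2)
      ((2 : ℝ) • (F * Matrix.diagonal (Pi.single i (1 : 𝕂)))) F := by
  simp only [colNormSq_eq_frobInner _ i]
  exact Matrix.IsHermitian.isFrobGradientAt_frobInner_mul (by simp [Matrix.IsHermitian]) F

lemma isFrobGradientAt_normTerm (r : Fin n → ℝ) (F : Matrix (Fin d) (Fin n) 𝕂) :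
    IsFrobGradientAt (fun A : Matrix (Fin d) (Fin n) 𝕂 =>
        (1 / 4) * ∑ i, ((∑ j, ‖A j i‖ ^ 2) / r i - 1) ^ 2)
      (F * Matrix.diagonal fun i => ((((∑ j, ‖F j i‖ ^ 2) / r i - 1) / r i : ℝ) : 𝕂)) F := by
  have hφ (i : Fin n) (t : ℝ) :
      HasDerivAt (fun t => (1 / 4) * (t / r i - 1) ^ 2) ((t / r i - 1) / r i / 2) t := by
    refine (((hasDerivAt_id' t).div_const (r i)).sub_const 1 |>.fun_pow 2 |>.const_mul
      (1 / 4)).congr_deriv ?_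
    push_cast
    ring
  have hsum := IsFrobGradientAt.sum Finset.univ fun i _ =>
    (hφ i _).comp_isFrobGradientAt (isFrobGradientAt_colNormSq F i)
  convert hsum using 1
  · funext A
    simp [Finset.mul_sum]
  · ext a b
    simp only [map_div₀, map_sub, map_sum, map_pow, map_one, Matrix.mul_diagonal,
      Matrix.sum_apply, Matrix.smul_apply, Pi.single_apply, mul_ite, mul_one, mul_zero, smul_ite,
      real_smul_eq_coe_mul, smul_zero, Finset.sum_ite_eq, Finset.mem_univ, ↓reduceIte]
    field_simp

noncomputable def frameEnergyGradient (r : Fin n → ℝ) (F : Matrix (Fin d) (Fin n) 𝕂) :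
    Matrix (Fin d) (Fin n) 𝕂 :=
  (4 : ℝ) • ((F * Fᴴ - 1) * F) +
    F * Matrix.diagonal fun i => ((((∑ j, ‖F j i‖ ^ 2) / r i - 1) / r i : ℝ) : 𝕂)

lemma isFrobGradientAt_totalFrameEnergy (r : Fin n → ℝ) (F : Matrix (Fin d) (Fin n) 𝕂) :
    IsFrobGradientAt (totalFrameEnergy r) (frameEnergyGradient r F) F :=
  (isFrobGradientAt_frameTerm F).add (isFrobGradientAt_normTerm r F)

lemma frameEnergyGradient_eq_zero_iff (r : Fin n → ℝ) (F : Matrix (Fin d) (Fin n) 𝕂) :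
    frameEnergyGradient r F = 0 ↔
      ∀ i, (4 : 𝕂) • (F * Fᴴ).mulVec (fun k => F k i) =
        algebraMap ℝ 𝕂 (4 + 1 / r i - (∑ j, ‖F j i‖ ^ 2) / r i ^ 2) • fun k => F k i := by
  have hentry (k : Fin d) (i : Fin n) : frameEnergyGradient r F k i = 0 ↔
      (4 : 𝕂) * (F * Fᴴ).mulVec (fun k => F k i) k =
        algebraMap ℝ 𝕂 (4 + 1 / r i - (∑ j, ‖F j i‖ ^ 2) / r i ^ 2) * F k i := by
    have hmulVec : (F * Fᴴ).mulVec (fun k => F k i) k = (F * Fᴴ * F) k i := by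
      simp [Matrix.mulVec, dotProduct, Matrix.mul_apply]
    simp only [frameEnergyGradient, hmulVec, Matrix.sub_mul, Matrix.one_mul, Matrix.add_apply,
      Matrix.smul_apply, Matrix.sub_apply, Matrix.mul_diagonal, RCLike.real_smul_eq_coe_mul,
      RCLike.algebraMap_eq_ofReal]
    push_cast
    constructor <;> intro h <;> linear_combination h
  simp only [← Matrix.ext_iff, Matrix.zero_apply, hentry, funext_iff, Pi.smul_apply, smul_eq_mul]
  exact forall_comm

end FrameEnergy

theorem stmt_11_general (d n : ℕ) (𝕂 : Type*) [RCLike 𝕂]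
    (r : Fin n → ℝ) (F : Matrix (Fin d) (Fin n) 𝕂) :
    IsFrobGradientAt (totalFrameEnergy r) (0 : Matrix (Fin d) (Fin n) 𝕂) F ↔
      ∀ i, (4 : 𝕂) • (F * Fᴴ).mulVec (fun k => F k i) =
        algebraMap ℝ 𝕂 (4 + 1 / r i - (∑ j, ‖F j i‖ ^ 2) / r i ^ 2) • fun k => F k i := by
  rw [(isFrobGradientAt_totalFrameEnergy r F).zero_iff, frameEnergyGradient_eq_zero_iff]

/-- `F` is a critical point of the total frame energy (`∇Φ_r(F) = 0`) iff
every column satisfies `4 F Fᴴ fᵢ = (4 + 1/rᵢ − ‖fᵢ‖²/rᵢ²) fᵢ`. -/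
theorem stmt_11 (d n : ℕ) (hd : 1 ≤ d) (hdn : d ≤ n) (𝕂 : Type*) [RCLike 𝕂]
    (r : Fin n → ℝ) (hr : ∀ i, 0 < r i) (F : Matrix (Fin d) (Fin n) 𝕂) :
    IsFrobGradientAt (totalFrameEnergy r) (0 : Matrix (Fin d) (Fin n) 𝕂) F ↔
      ∀ i, (4 : 𝕂) • (F * Fᴴ).mulVec (fun k => F k i) =
        algebraMap ℝ 𝕂 (4 + 1 / r i - (∑ j, ‖F j i‖ ^ 2) / r i ^ 2) • fun k => F k i :=
  stmt_11_general d n 𝕂 r F
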